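/- arXiv:2112.03483 — 7 statements merged into one kernel-verified Lean document; each statement's English description precedes it below -/
import Mathlib

section
/- Let C be a nonempty closed convex subset of ℝⁿ and let f : ℝⁿ × ℝⁿ → ℝ satisfy f(x,x) = 0 for every x ∈ C. Assume that for every y ∈ C the function x ↦ f(x,y) is upper semicontinuous, and that for every x ∈ C the function y ↦ f(x,y) is semi-strictly quasiconvex on C. Then every solution of the Minty (dual) equilibrium problem is a solution of the equilibrium problem, i.e., if z* ∈ C satisfies f(y, z*) ≤ 0 for all y ∈ C, then f(z*, y) ≥ 0 for all y ∈ C. -/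
open Filter Topology

/-- `φ` is quasiconvex on the convex set `C`:
`φ((1−λ)x + λy) ≤ max{φ(x), φ(y)}` for all `x, y ∈ C` and `λ ∈ [0,1]`. -/
def QuasiconvexOn' {n : ℕ} (C : Set (EuclideanSpace ℝ (Fin n)))
    (φ : EuclideanSpace ℝ (Fin n) → ℝ) : Prop :=
  ∀ x ∈ C, ∀ y ∈ C, ∀ l : ℝ, l ∈ Set.Icc (0 : ℝ) 1 →
    φ ((1 - l) • x + l • y) ≤ max (φ x) (φ y)

/-- `φ` is semi-strictly quasiconvex on `C`: it is quasiconvex on `C` and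
`φ(x) < φ(y)` implies `φ((1−λ)x + λy) < φ(y)` for `λ ∈ (0,1)`. -/
def SemiStrictlyQuasiconvexOn {n : ℕ} (C : Set (EuclideanSpace ℝ (Fin n)))
    (φ : EuclideanSpace ℝ (Fin n) → ℝ) : Prop :=
  QuasiconvexOn' C φ ∧
    ∀ x ∈ C, ∀ y ∈ C, ∀ l : ℝ, l ∈ Set.Ioo (0 : ℝ) 1 →
      φ x < φ y → φ ((1 - l) • x + l • y) < φ y

theorem minty_solution_is_equilibrium_solution {n : ℕ}
    (C : Set (EuclideanSpace ℝ (Fin n)))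
    (hCne : C.Nonempty) (hCcl : IsClosed C) (hCcv : Convex ℝ C)
    (f : EuclideanSpace ℝ (Fin n) → EuclideanSpace ℝ (Fin n) → ℝ)
    (hdiag : ∀ x ∈ C, f x x = 0)
    (husc : ∀ y ∈ C, UpperSemicontinuous (fun x => f x y))
    (hssq : ∀ x ∈ C, SemiStrictlyQuasiconvexOn C (f x))
    (zstar : EuclideanSpace ℝ (Fin n)) (hz : zstar ∈ C)
    (hminty : ∀ y ∈ C, f y zstar ≤ 0) :
    ∀ y ∈ C, 0 ≤ f zstar y := by
  intro y hy
  by_contra hneg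
  push_neg at hneg
  -- Claim: for every t ∈ (0,1), f x_t y ≥ 0 where x_t = (1-t)•z* + t•y
  have claim : ∀ t : ℝ, t ∈ Set.Ioo (0:ℝ) 1 → 0 ≤ f ((1 - t) • zstar + t • y) y := by
    intro t ht
    set x : EuclideanSpace ℝ (Fin n) := (1 - t) • zstar + t • y with hxdef
    have hxC : x ∈ C := hCcv hz hy (by linarith [ht.2]) (by linarith [ht.1]) (by ring)
    obtain ⟨qc, ssq⟩ := hssq x hxC
    have hfxx : f x x = 0 := hdiag x hxC
    have hfxz : f x zstar ≤ 0 := hminty x hxC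
    by_contra hlt
    push_neg at hlt
    rcases lt_or_ge (f x y) (f x zstar) with hcase | hcase
    · have := ssq y hy zstar hz (1 - t) ⟨by linarith [ht.2], by linarith [ht.1]⟩ hcase
      have hrw : (1 - (1 - t)) • y + (1 - t) • zstar = x := by
        rw [hxdef, show (1:ℝ) - (1 - t) = t by ring]; exact add_comm _ _
      rw [hrw, hfxx] at this
      linarith
    · have := qc zstar hz y hy t ⟨le_of_lt ht.1, le_of_lt ht.2⟩
      rw [← hxdef, hfxx, max_eq_right hcase] at this
      linarith
  -- USC: eventually f x y < 0 near z*
  have husc' := husc y hy zstar 0 hneg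
  have hg : Filter.Tendsto (fun t : ℝ => (1 - t) • zstar + t • y) (𝓝 0) (𝓝 zstar) := by
    have : Continuous (fun t : ℝ => (1 - t) • zstar + t • y) := by continuity
    have h0 : (1 - (0:ℝ)) • zstar + (0:ℝ) • y = zstar := by simp
    simpa [h0] using this.tendsto 0
  have hev : ∀ᶠ t : ℝ in 𝓝[Set.Ioo (0:ℝ) 1] 0,
      f ((1 - t) • zstar + t • y) y < 0 := by
    have := hg.eventually husc'
    exact (this.filter_mono nhdsWithin_le_nhds)
  have hmem : ∀ᶠ t : ℝ in 𝓝[Set.Ioo (0:ℝ) 1] 0, t ∈ Set.Ioo (0:ℝ) 1 :=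
    eventually_mem_nhdsWithin
  have hne : (𝓝[Set.Ioo (0:ℝ) 1] (0:ℝ)).NeBot := by
    refine mem_closure_iff_nhdsWithin_neBot.mp ?_
    rw [closure_Ioo (by norm_num : (0:ℝ) ≠ 1)]
    exact ⟨le_refl 0, by norm_num⟩
  obtain ⟨t, hlt, htmem⟩ := (hev.and hmem).exists
  exact absurd (claim t htmem) (not_le.mpr hlt)
end

section
/- Let C be a nonempty closed convex subset of ℝⁿ, f : ℝⁿ × ℝⁿ → ℝ with f(x,x) = 0 for all x ∈ C, let x ∈ C and ρ > 0, and assume that the function y ↦ f(x,y) is semi-strictly quasiconvex on C and that x itself minimizes y ↦ f(x,y) + (1/(2ρ))‖y − x‖² over C. Then for every y ∈ C with f(x,y) < 0, the directional derivative of f(x,·) at x in the direction d = y − x is zero; precisely, (f(x, x + λd) − f(x,x))/λ → 0 as λ → 0⁺. -/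
open Filter Topology

theorem directional_derivative_zero_at_prox_fixed_point {n : ℕ}
    (C : Set (EuclideanSpace ℝ (Fin n)))
    (hCne : C.Nonempty) (hCcl : IsClosed C) (hCcv : Convex ℝ C)
    (f : EuclideanSpace ℝ (Fin n) → EuclideanSpace ℝ (Fin n) → ℝ)
    (hdiag : ∀ u ∈ C, f u u = 0)
    (x : EuclideanSpace ℝ (Fin n)) (hx : x ∈ C)
    (ρ : ℝ) (hρ : 0 < ρ)
    (hssq : SemiStrictlyQuasiconvexOn C (f x))
    (hmin : ∀ u ∈ C,
      f x x + (1 / (2 * ρ)) * ‖x - x‖ ^ 2 ≤ f x u + (1 / (2 * ρ)) * ‖u - x‖ ^ 2) :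
    ∀ y ∈ C, f x y < 0 →
      Tendsto (fun l : ℝ => (f x (x + l • (y - x)) - f x x) / l)
        (nhdsWithin 0 (Set.Ioi 0)) (nhds 0) := by
  intro y hy hfy
  have hfxx : f x x = 0 := hdiag x hx
  have key : ∀ l : ℝ, l ∈ Set.Ioo (0:ℝ) 1 →
      -(l/(2*ρ)) * ‖y - x‖^2 ≤ (f x (x + l • (y - x)) - f x x)/l ∧
      (f x (x + l • (y - x)) - f x x)/l ≤ 0 := by
    intro l hl
    have hl0 := hl.1
    have hmem : x + l • (y - x) ∈ C := by
      have h := hCcv hy hx hl0.le (by linarith [hl.2] : (0:ℝ) ≤ 1 - l) (by ring)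
      convert h using 1
      module
    constructor
    · have h1 := hmin _ hmem
      have hnorm : ‖x + l • (y - x) - x‖ = l * ‖y - x‖ := by
        rw [add_sub_cancel_left, norm_smul, Real.norm_eq_abs, abs_of_pos hl0]
      rw [hfxx, sub_self, norm_zero, hnorm] at h1
      norm_num at h1
      rw [hfxx, sub_zero, le_div_iff₀ hl0]
      have heq : -(l/(2*ρ)) * ‖y - x‖^2 * l = -(ρ⁻¹ * (1/2) * (l * ‖y - x‖)^2) := by
        ring
      rw [heq]
      linarith
    · have h2 := hssq.2 y hy x hx (1 - l) ⟨by linarith [hl.2], by linarith⟩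
        (by rw [hfxx]; exact hfy)
      rw [hfxx] at h2
      have heq : (1 - (1 - l)) • y + (1 - l) • x = x + l • (y - x) := by module
      rw [heq] at h2
      rw [hfxx, sub_zero]
      exact le_of_lt (div_neg_of_neg_of_pos h2 hl0)
  have hmem : Set.Ioo (0:ℝ) 1 ∈ nhdsWithin (0:ℝ) (Set.Ioi 0) :=
    Ioo_mem_nhdsGT_of_mem ⟨le_refl _, zero_lt_one⟩
  have hg : Tendsto (fun l : ℝ => -(l/(2*ρ)) * ‖y - x‖^2)
      (nhdsWithin 0 (Set.Ioi 0)) (nhds 0) := by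
    have : Tendsto (fun l : ℝ => -(l/(2*ρ)) * ‖y - x‖^2) (nhds 0) (nhds 0) := by
      have hc : Continuous (fun l : ℝ => -(l/(2*ρ)) * ‖y - x‖^2) := by continuity
      have := hc.tendsto 0
      simpa using this
    exact this.mono_left nhdsWithin_le_nhds
  refine tendsto_of_tendsto_of_tendsto_of_le_of_le' hg tendsto_const_nhds ?_ ?_
  · filter_upwards [hmem] with l hl
    exact (key l hl).1
  · filter_upwards [hmem] with l hl
    exact (key l hl).2
end

section
/- Let C be a nonempty closed convex subset of ℝⁿ, f : ℝⁿ × ℝⁿ → ℝ with f(x,x) = 0 for all x ∈ C, let x ∈ C and ρ > 0. Assume the function y ↦ f(x,y) is differentiable on an open set containing C and pseudoconvex on C, and that x itself minimizes y ↦ f(x,y) + (1/(2ρ))‖y − x‖² over C. Then x is a solution of the equilibrium problem, i.e., f(x,y) ≥ 0 for all y ∈ C. -/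
open Filter Topology RealInnerProductSpace

/-!
Adding `c * ‖u - x‖ ^ 2` does not change the derivative at `x`, so the first-order condition
for `x` minimizing the regularized function over the convex set `C` says that
`⟪∇ f(x, ·) x, y - x⟫ ≥ 0` for every `y ∈ C`. Pseudoconvexity then gives
`f(x, y) ≥ f(x, x) = 0`.
-/

section FirstOrder

variable {E : Type*} [NormedAddCommGroup E] [NormedSpace ℝ E]

theorem hasFDerivAt_sq_norm_sub_self (x : E) :
    HasFDerivAt (fun u => ‖u - x‖ ^ 2) (0 : StrongDual ℝ E) x := by
  rw [hasFDerivAt_iff_isLittleO_nhds_zero]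
  simpa using Asymptotics.isLittleO_norm_pow_id (E' := E) one_lt_two

theorem IsMinOn.hasFDerivAt_nonneg_of_convex {g : E → ℝ} {g' : StrongDual ℝ E} {s : Set E}
    {x y : E} (hmin : IsMinOn g s x) (hg : HasFDerivAt g g' x) (hs : Convex ℝ s)
    (hx : x ∈ s) (hy : y ∈ s) : 0 ≤ g' (y - x) :=
  hmin.localize.hasFDerivWithinAt_nonneg hg.hasFDerivWithinAt
    (sub_mem_posTangentConeAt_of_segment_subset (hs.segment_subset hx hy))

theorem IsMinOn.hasFDerivAt_nonneg_of_add_sq_norm_sub {g : E → ℝ} {g' : StrongDual ℝ E}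
    {s : Set E} {x y : E} {c : ℝ} (hmin : IsMinOn (fun u => g u + c * ‖u - x‖ ^ 2) s x)
    (hg : HasFDerivAt g g' x) (hs : Convex ℝ s) (hx : x ∈ s) (hy : y ∈ s) :
    0 ≤ g' (y - x) := by
  have hreg : HasFDerivAt (fun u => g u + c * ‖u - x‖ ^ 2) g' x := by
    simpa using hg.fun_add ((hasFDerivAt_sq_norm_sub_self x).const_mul c)
  exact hmin.hasFDerivAt_nonneg_of_convex hreg hs hx hy

end FirstOrder

theorem prox_fixed_point_is_solution_of_pseudoconvex_general {n : ℕ}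
    (C : Set (EuclideanSpace ℝ (Fin n)))
    (hCcv : Convex ℝ C)
    (f : EuclideanSpace ℝ (Fin n) → EuclideanSpace ℝ (Fin n) → ℝ)
    (hdiag : ∀ u ∈ C, f u u = 0)
    (x : EuclideanSpace ℝ (Fin n)) (hx : x ∈ C)
    (ρ : ℝ)
    -- f(x,·) is differentiable on an open set containing C
    (hdiff : ∃ U : Set (EuclideanSpace ℝ (Fin n)), IsOpen U ∧ C ⊆ U ∧
      ∀ u ∈ U, DifferentiableAt ℝ (f x) u)
    -- f(x,·) is pseudoconvex on C
    (hpseudo : ∀ u ∈ C, ∀ v ∈ C,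
      0 ≤ ⟪gradient (f x) u, v - u⟫ → f x u ≤ f x v)
    -- x minimizes y ↦ f(x,y) + (1/(2ρ))‖y − x‖² over C
    (hmin : ∀ u ∈ C,
      f x x + (1 / (2 * ρ)) * ‖x - x‖ ^ 2 ≤ f x u + (1 / (2 * ρ)) * ‖u - x‖ ^ 2) :
    ∀ y ∈ C, 0 ≤ f x y := by
  intro y hy
  obtain ⟨U, -, hCU, hdiffU⟩ := hdiff
  have hfx : HasFDerivAt (f x) (fderiv ℝ (f x) x) x := (hdiffU x (hCU hx)).hasFDerivAt
  have hstationary : 0 ≤ ⟪gradient (f x) x, y - x⟫ := by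
    rw [inner_gradient_left]
    exact IsMinOn.hasFDerivAt_nonneg_of_add_sq_norm_sub (fun u hu => hmin u hu) hfx hCcv hx hy
  simpa [hdiag x hx] using hpseudo x hx y hy hstationary

theorem prox_fixed_point_is_solution_of_pseudoconvex {n : ℕ}
    (C : Set (EuclideanSpace ℝ (Fin n)))
    (hCne : C.Nonempty) (hCcl : IsClosed C) (hCcv : Convex ℝ C)
    (f : EuclideanSpace ℝ (Fin n) → EuclideanSpace ℝ (Fin n) → ℝ)
    (hdiag : ∀ u ∈ C, f u u = 0)
    (x : EuclideanSpace ℝ (Fin n)) (hx : x ∈ C)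
    (ρ : ℝ) (hρ : 0 < ρ)
    -- f(x,·) is differentiable on an open set containing C
    (hdiff : ∃ U : Set (EuclideanSpace ℝ (Fin n)), IsOpen U ∧ C ⊆ U ∧
      ∀ u ∈ U, DifferentiableAt ℝ (f x) u)
    -- f(x,·) is pseudoconvex on C
    (hpseudo : ∀ u ∈ C, ∀ v ∈ C,
      0 ≤ ⟪gradient (f x) u, v - u⟫ → f x u ≤ f x v)
    -- x minimizes y ↦ f(x,y) + (1/(2ρ))‖y − x‖² over C
    (hmin : ∀ u ∈ C,
      f x x + (1 / (2 * ρ)) * ‖x - x‖ ^ 2 ≤ f x u + (1 / (2 * ρ)) * ‖u - x‖ ^ 2) :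
    ∀ y ∈ C, 0 ≤ f x y :=
  prox_fixed_point_is_solution_of_pseudoconvex_general C hCcv f hdiag x hx ρ hdiff hpseudo hmin
end

section
/- Let C be a nonempty closed convex subset of ℝⁿ, f : ℝⁿ × ℝⁿ → ℝ with f(x,x) = 0 for all x ∈ C, let x ∈ C and ρ > 0. Assume the function y ↦ f(x,y) is strongly quasiconvex on C with modulus γ > 0, and that x itself minimizes y ↦ f(x,y) + (1/(2ρ))‖y − x‖² over C. Then x is a solution of the equilibrium problem, i.e., f(x,y) ≥ 0 for all y ∈ C. -/
open Filter Topology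

/-- `φ` is strongly quasiconvex on `C` with modulus `γ > 0`:
`φ(λu + (1−λ)v) ≤ max{φ(u), φ(v)} − λ(1−λ)(γ/2)‖u − v‖²` for `u, v ∈ C`, `λ ∈ [0,1]`. -/
def StronglyQuasiconvexOn {n : ℕ} (C : Set (EuclideanSpace ℝ (Fin n))) (γ : ℝ)
    (φ : EuclideanSpace ℝ (Fin n) → ℝ) : Prop :=
  ∀ u ∈ C, ∀ v ∈ C, ∀ l : ℝ, l ∈ Set.Icc (0 : ℝ) 1 →
    φ (l • u + (1 - l) • v) ≤ max (φ u) (φ v) - l * (1 - l) * (γ / 2) * ‖u - v‖ ^ 2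

theorem prox_fixed_point_is_solution_of_strongly_quasiconvex {n : ℕ}
    (C : Set (EuclideanSpace ℝ (Fin n)))
    (hCne : C.Nonempty) (hCcl : IsClosed C) (hCcv : Convex ℝ C)
    (f : EuclideanSpace ℝ (Fin n) → EuclideanSpace ℝ (Fin n) → ℝ)
    (hdiag : ∀ u ∈ C, f u u = 0)
    (x : EuclideanSpace ℝ (Fin n)) (hx : x ∈ C)
    (ρ : ℝ) (hρ : 0 < ρ)
    (γ : ℝ) (hγ : 0 < γ)
    (hsq : StronglyQuasiconvexOn C γ (f x))
    (hmin : ∀ u ∈ C,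
      f x x + (1 / (2 * ρ)) * ‖x - x‖ ^ 2 ≤ f x u + (1 / (2 * ρ)) * ‖u - x‖ ^ 2) :
    ∀ y ∈ C, 0 ≤ f x y := by
  intro y hy
  by_contra hneg
  push_neg at hneg
  have hyx : y ≠ x := by
    intro h; rw [h, hdiag x hx] at hneg; exact lt_irrefl 0 hneg
  have hd : (0:ℝ) < ‖y - x‖ := by
    rw [norm_pos_iff]; exact sub_ne_zero.mpr hyx
  set d := ‖y - x‖ with hdd
  have h1 : (0:ℝ) < 1 + ρ * γ := by positivity
  set l : ℝ := ρ * γ / (2 * (1 + ρ * γ)) with hl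
  have hl0 : 0 < l := by positivity
  have hld : l * (2 * (1 + ρ * γ)) = ρ * γ := by
    rw [hl]; field_simp
  have hl1 : l < 1/2 := by
    rw [hl, div_lt_iff₀ (by positivity)]
    nlinarith
  have hlm : l ∈ Set.Icc (0:ℝ) 1 := ⟨le_of_lt hl0, by linarith⟩
  set z := l • y + (1 - l) • x with hz
  have hzC : z ∈ C := hCcv hy hx (le_of_lt hl0) (by linarith) (by ring)
  have hznorm : ‖z - x‖ = l * d := by
    have hzx : z - x = l • (y - x) := by
      rw [hz]; module
    rw [hzx, norm_smul, Real.norm_eq_abs, abs_of_pos hl0]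
  have hsq' := hsq y hy x hx l hlm
  have hmax : max (f x y) (f x x) = 0 := by
    rw [hdiag x hx]; exact max_eq_right (le_of_lt hneg)
  rw [hmax] at hsq'
  have hmin' := hmin z hzC
  rw [hdiag x hx, sub_self, norm_zero, hznorm] at hmin'
  rw [← hz, ← hdd] at hsq'
  have key : l * (1 - l) * (γ / 2) * d ^ 2 ≤ 1 / (2 * ρ) * (l * d) ^ 2 := by
    linarith [hsq', hmin']
  have key2 : 2 * ρ * (l * (1 - l) * (γ / 2) * d ^ 2) ≤ 2 * ρ * (1 / (2 * ρ) * (l * d) ^ 2) :=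
    mul_le_mul_of_nonneg_left key (by positivity)
  have hsimp : 2 * ρ * (1 / (2 * ρ) * (l * d) ^ 2) = l * d ^ 2 * l := by
    field_simp
  have key2' : (ρ * (1 - l) * γ) * (l * d ^ 2) ≤ l * (l * d ^ 2) := by
    rw [hsimp] at key2; nlinarith [key2]
  have key3 : ρ * (1 - l) * γ ≤ l :=
    le_of_mul_le_mul_right key2' (by positivity)
  nlinarith [key3, hld, hl0, mul_pos hρ hγ]
end

section
/- Let C be a nonempty closed convex subset of ℝⁿ, f : ℝⁿ × ℝⁿ → ℝ continuous with f(x,x) = 0 for all x ∈ C, let α, θ ∈ (0,1), ρ > 0, x ∈ C, and let y ∈ C minimize u ↦ f(x,u) + (1/(2ρ))‖u − x‖² over C with y ≠ x. Then there exists a positive integer m such that, setting z = (1 − θᵐ)x + θᵐ y, one has f(z, x) − f(z, y) ≥ (α/(2ρ))‖y − x‖². -/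
open Filter Topology

theorem linesearch_terminates {n : ℕ}
    (C : Set (EuclideanSpace ℝ (Fin n)))
    (hCne : C.Nonempty) (hCcl : IsClosed C) (hCcv : Convex ℝ C)
    (f : EuclideanSpace ℝ (Fin n) → EuclideanSpace ℝ (Fin n) → ℝ)
    (hcont : Continuous fun p : EuclideanSpace ℝ (Fin n) × EuclideanSpace ℝ (Fin n) =>
      f p.1 p.2)
    (hdiag : ∀ u ∈ C, f u u = 0)
    (α θ : ℝ) (hα : α ∈ Set.Ioo (0 : ℝ) 1) (hθ : θ ∈ Set.Ioo (0 : ℝ) 1)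
    (ρ : ℝ) (hρ : 0 < ρ)
    (x : EuclideanSpace ℝ (Fin n)) (hx : x ∈ C)
    (y : EuclideanSpace ℝ (Fin n)) (hy : y ∈ C) (hyx : y ≠ x)
    (hmin : ∀ u ∈ C,
      f x y + (1 / (2 * ρ)) * ‖y - x‖ ^ 2 ≤ f x u + (1 / (2 * ρ)) * ‖u - x‖ ^ 2) :
    ∃ m : ℕ, 0 < m ∧
      f ((1 - θ ^ m) • x + θ ^ m • y) x - f ((1 - θ ^ m) • x + θ ^ m • y) y ≥
        (α / (2 * ρ)) * ‖y - x‖ ^ 2 := by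
  obtain ⟨hθ0, hθ1⟩ := hθ
  obtain ⟨hα0, hα1⟩ := hα
  have hθpow : Tendsto (fun m : ℕ => θ ^ m) atTop (𝓝 0) :=
    tendsto_pow_atTop_nhds_zero_of_lt_one hθ0.le hθ1
  have hz : Tendsto (fun m : ℕ => (1 - θ ^ m) • x + θ ^ m • y) atTop (𝓝 x) := by
    have h := ((hθpow.const_sub 1).smul_const x).add (hθpow.smul_const y)
    simpa using h
  have hg : Tendsto (fun m : ℕ =>
      f ((1 - θ ^ m) • x + θ ^ m • y) x - f ((1 - θ ^ m) • x + θ ^ m • y) y)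
      atTop (𝓝 (f x x - f x y)) := by
    have h1 : Tendsto (fun m : ℕ => f ((1 - θ ^ m) • x + θ ^ m • y) x) atTop (𝓝 (f x x)) :=
      (hcont.tendsto (x, x)).comp (hz.prodMk_nhds tendsto_const_nhds)
    have h2 : Tendsto (fun m : ℕ => f ((1 - θ ^ m) • x + θ ^ m • y) y) atTop (𝓝 (f x y)) :=
      (hcont.tendsto (x, y)).comp (hz.prodMk_nhds tendsto_const_nhds)
    exact h1.sub h2
  have hnorm : 0 < ‖y - x‖ ^ 2 := by
    have h0 : (0:ℝ) < ‖y - x‖ := norm_pos_iff.mpr (sub_ne_zero.mpr hyx)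
    positivity
  have hmx := hmin x hx
  rw [hdiag x hx, sub_self, norm_zero] at hmx
  have hlt : (α / (2 * ρ)) * ‖y - x‖ ^ 2 < f x x - f x y := by
    rw [hdiag x hx]
    have h1 : f x y + (1 / (2 * ρ)) * ‖y - x‖ ^ 2 ≤ 0 := by
      simpa using hmx
    have h2 : (α / (2 * ρ)) * ‖y - x‖ ^ 2 < (1 / (2 * ρ)) * ‖y - x‖ ^ 2 := by
      apply mul_lt_mul_of_pos_right _ hnorm
      gcongr <;> linarith
    linarith
  obtain ⟨m, hm1, hm2⟩ := ((hg.eventually (eventually_gt_nhds hlt)).and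
    (eventually_gt_atTop 0)).exists
  exact ⟨m, hm2, hm1.le⟩
end

section
/- Let C be a nonempty closed convex subset of ℝⁿ and f : ℝⁿ × ℝⁿ → ℝ jointly continuous with f(x,x) = 0 for all x ∈ C, and assume f(x,·) is semi-strictly quasiconvex on C for every x ∈ C. Assume there exists z* ∈ C with f(y, z*) ≤ 0 for all y ∈ C. Let α ∈ (0,1), θ₀ ∈ (0,1), let (ρ_k) be a nonincreasing sequence of positive reals converging to ρ̄ > 0, and (σ_k) positive reals with Σσ_k = ∞ and Σσ_k² < ∞. Let (x^k), (y^k) ⊆ C, (t_k) ⊆ [θ₀, 1), (z^k), (g^k) ⊆ ℝⁿ satisfy for every k: (a) y^k minimizes u ↦ f(x^k,u) + (1/(2ρ_k))‖u − x^k‖² over C and y^k ≠ x^k; (b) z^k = (1 − t_k)x^k + t_k y^k and f(z^k, x^k) − f(z^k, y^k) ≥ (α/(2ρ_k))‖y^k − x^k‖²; (c) g^k ∈ ∂*₂f(z^k, x^k) with ‖g^k‖ = 1; (d) x^{k+1} is the metric projection of x^k − σ_k g^k onto C; and assume (y^k) is bounded. Then there exist x̄ ∈ C and a subsequence of (x^k)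 converging to x̄ such that x̄ is a ρ̄-quasi-solution: f(x̄, y) + (1/(2ρ̄))‖y − x̄‖² ≥ 0 for all y ∈ C. If, in addition, f(x,·) is strongly quasiconvex on C with some modulus γ > 0 for every x ∈ C, then the whole sequence (x^k) converges to the unique solution of the equilibrium problem on C. -/
open Filter Topology RealInnerProductSpace

/-- The star-subdifferential (normal subdifferential) of `u ↦ f z u` at `x`. -/
def starSubdiff2 {n : ℕ} (f : EuclideanSpace ℝ (Fin n) → EuclideanSpace ℝ (Fin n) → ℝ)
    (z x : EuclideanSpace ℝ (Fin n)) : Set (EuclideanSpace ℝ (Fin n)) :=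
  {g | ∀ u, f z u < f z x → ⟪g, u - x⟫ < 0}

/-- Auxiliary positivity lemma: if `φ` is semi-strictly quasiconvex, vanishes at an
interior point of the segment `[x, y]`, and `φ y < φ x`, then `φ x > 0`. -/
lemma posA {n : ℕ} {C : Set (EuclideanSpace ℝ (Fin n))} {φ : EuclideanSpace ℝ (Fin n) → ℝ}
    (hq : SemiStrictlyQuasiconvexOn C φ) {x y : EuclideanSpace ℝ (Fin n)}
    (hx : x ∈ C) (hy : y ∈ C) {t : ℝ} (ht0 : 0 < t) (ht1 : t < 1)
    (hz0 : φ ((1 - t) • x + t • y) = 0) (hlt : φ y < φ x) : 0 < φ x := by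
  by_contra h
  push_neg at h
  have hq1 := hq.1 x hx y hy t ⟨ht0.le, ht1.le⟩
  rw [hz0, max_eq_left hlt.le] at hq1
  have hx0 : φ x = 0 := le_antisymm h hq1
  have h2 := hq.2 y hy x hx (1 - t) ⟨by linarith, by linarith⟩ hlt
  have he : (1 - (1 - t)) • y + (1 - t) • x = (1 - t) • x + t • y := by module
  rw [he, hz0, hx0] at h2
  exact lt_irrefl _ h2

set_option maxHeartbeats 2000000

theorem convergence_of_extragradient_linesearch_algorithm {n : ℕ}
    (C : Set (EuclideanSpace ℝ (Fin n)))
    (hCne : C.Nonempty) (hCcl : IsClosed C) (hCcv : Convex ℝ C)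
    (f : EuclideanSpace ℝ (Fin n) → EuclideanSpace ℝ (Fin n) → ℝ)
    (hcont : Continuous fun p : EuclideanSpace ℝ (Fin n) × EuclideanSpace ℝ (Fin n) =>
      f p.1 p.2)
    (hdiag : ∀ u ∈ C, f u u = 0)
    (hssq : ∀ u ∈ C, SemiStrictlyQuasiconvexOn C (f u))
    (zstar : EuclideanSpace ℝ (Fin n)) (hzstar : zstar ∈ C)
    (hminty : ∀ y ∈ C, f y zstar ≤ 0)
    (α θ₀ : ℝ) (hα : α ∈ Set.Ioo (0 : ℝ) 1) (hθ₀ : θ₀ ∈ Set.Ioo (0 : ℝ) 1)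
    (ρ : ℕ → ℝ) (hρpos : ∀ k, 0 < ρ k) (hρanti : Antitone ρ)
    (ρbar : ℝ) (hρbar : 0 < ρbar) (hρlim : Tendsto ρ atTop (nhds ρbar))
    (σ : ℕ → ℝ) (hσpos : ∀ k, 0 < σ k)
    (hσdiv : Tendsto (fun N => ∑ k ∈ Finset.range N, σ k) atTop atTop)
    (hσsq : Summable fun k => (σ k) ^ 2)
    (x y : ℕ → EuclideanSpace ℝ (Fin n))
    (hxC : ∀ k, x k ∈ C) (hyC : ∀ k, y k ∈ C)
    (t : ℕ → ℝ) (ht : ∀ k, θ₀ ≤ t k ∧ t k < 1)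
    (z g : ℕ → EuclideanSpace ℝ (Fin n))
    -- (a) y k minimizes u ↦ f(x k, u) + (1/(2 ρ k))‖u − x k‖² over C, and y k ≠ x k
    (ha : ∀ k, (∀ u ∈ C,
        f (x k) (y k) + (1 / (2 * ρ k)) * ‖y k - x k‖ ^ 2 ≤
          f (x k) u + (1 / (2 * ρ k)) * ‖u - x k‖ ^ 2) ∧ y k ≠ x k)
    -- (b) z k lies on the segment and satisfies the linesearch inequality
    (hb : ∀ k, z k = (1 - t k) • x k + t k • y k ∧
        f (z k) (x k) - f (z k) (y k) ≥ (α / (2 * ρ k)) * ‖y k - x k‖ ^ 2)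
    -- (c) g k is a unit normal-subgradient
    (hc : ∀ k, g k ∈ starSubdiff2 f (z k) (x k) ∧ ‖g k‖ = 1)
    -- (d) x (k+1) is the metric projection of x k − σ k • g k onto C
    (hd : ∀ k, x (k + 1) ∈ C ∧
        ∀ u ∈ C, ⟪(x k - σ k • g k) - x (k + 1), u - x (k + 1)⟫ ≤ 0)
    -- (y k) is bounded
    (hybdd : ∃ M : ℝ, ∀ k, ‖y k‖ ≤ M) :
    (∃ xbar ∈ C, ∃ φ : ℕ → ℕ, StrictMono φ ∧
        Tendsto (fun j => x (φ j)) atTop (nhds xbar) ∧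
        ∀ u ∈ C, 0 ≤ f xbar u + (1 / (2 * ρbar)) * ‖u - xbar‖ ^ 2) ∧
      ((∀ u ∈ C, ∃ γ : ℝ, 0 < γ ∧ StronglyQuasiconvexOn C γ (f u)) →
        ∃ xsol ∈ C, Tendsto x atTop (nhds xsol) ∧
          (∀ u ∈ C, 0 ≤ f xsol u) ∧
          ∀ w ∈ C, (∀ u ∈ C, 0 ≤ f w u) → w = xsol) := by
  classical
  obtain ⟨hα0, hα1⟩ := hα
  obtain ⟨hθ0, hθ1⟩ := hθ₀
  set a : ℕ → ℝ := fun k => ‖x k - zstar‖ ^ 2 with ha_def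
  set d : ℕ → ℝ := fun k => ⟪g k, x k - zstar⟫ with hd_def
  set T : ℝ := ∑' k, (σ k) ^ 2 with hT_def
  have hT0 : 0 ≤ T := tsum_nonneg fun k => sq_nonneg _
  have hzC : ∀ k, z k ∈ C := by
    intro k
    rw [(hb k).1]
    exact hCcv (hxC k) (hyC k) (by linarith [(ht k).2]) (by linarith [(ht k).1]) (by ring)
  have hyx : ∀ k, 0 < ‖y k - x k‖ := fun k => norm_pos_iff.2 (sub_ne_zero_of_ne (ha k).2)
  have hρk : ∀ k, ρbar ≤ ρ k := fun k =>
    le_of_tendsto hρlim (eventually_atTop.2 ⟨k, fun m hm => hρanti hm⟩)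
  have hfzx : ∀ k, 0 < f (z k) (x k) := by
    intro k
    have h1 : 0 < (α / (2 * ρ k)) * ‖y k - x k‖ ^ 2 :=
      mul_pos (div_pos hα0 (by linarith [hρpos k])) (pow_pos (hyx k) 2)
    have hlt : f (z k) (y k) < f (z k) (x k) := by linarith [(hb k).2]
    exact posA (hssq _ (hzC k)) (hxC k) (hyC k) (by linarith [(ht k).1]) (ht k).2
      (by rw [← (hb k).1]; exact hdiag _ (hzC k)) hlt
  have hdpos : ∀ k, 0 < d k := by
    intro k
    have h1 : f (z k) zstar < f (z k) (x k) := lt_of_le_of_lt (hminty _ (hzC k)) (hfzx k)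
    have h2 := (hc k).1 zstar h1
    have h3 : ⟪g k, zstar - x k⟫ = -⟪g k, x k - zstar⟫ := by
      rw [← inner_neg_right, neg_sub]
    rw [h3] at h2
    simp only [hd_def]
    linarith
  have hfejer : ∀ k, a (k + 1) ≤ a k - 2 * σ k * d k + σ k ^ 2 := by
    intro k
    have h1 : ⟪(x k - σ k • g k) - x (k + 1), zstar - x (k + 1)⟫ ≤ 0 := (hd k).2 zstar hzstar
    have h2 : ‖x (k + 1) - zstar‖ ^ 2 ≤ ‖(x k - σ k • g k) - zstar‖ ^ 2 := by
      have he : (x k - σ k • g k) - zstar = ((x k - σ k • g k) - x (k + 1)) + (x (k + 1) - zstar) := by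
        abel
      rw [he, norm_add_sq_real]
      have h3 : ⟪(x k - σ k • g k) - x (k + 1), x (k + 1) - zstar⟫
          = -⟪(x k - σ k • g k) - x (k + 1), zstar - x (k + 1)⟫ := by
        rw [← inner_neg_right, neg_sub]
      nlinarith [sq_nonneg ‖(x k - σ k • g k) - x (k + 1)‖]
    have h4 : ‖(x k - σ k • g k) - zstar‖ ^ 2 = a k - 2 * σ k * d k + σ k ^ 2 := by
      have he : (x k - σ k • g k) - zstar = (x k - zstar) - σ k • g k := by abel
      rw [he, norm_sub_sq_real, real_inner_smul_right, norm_smul, real_inner_comm]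
      simp only [hd_def, ha_def, Real.norm_eq_abs, abs_of_pos (hσpos k), (hc k).2]
      ring
    simp only [ha_def] at *
    linarith
  have hstep : ∀ k, a (k + 1) ≤ a k + σ k ^ 2 := fun k => by
    nlinarith [hfejer k, hdpos k, hσpos k]
  have ha0 : ∀ k, 0 ≤ a k := fun k => by simp only [ha_def]; positivity
  have hapart : ∀ M, ∑ k ∈ Finset.range M, (2 * σ k * d k) + a M
      ≤ a 0 + ∑ k ∈ Finset.range M, σ k ^ 2 := by
    intro M
    induction M with
    | zero => simp
    | succ m ih =>
      rw [Finset.sum_range_succ, Finset.sum_range_succ]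
      have := hfejer m
      linarith
  have hsd : ∀ M, ∑ k ∈ Finset.range M, (2 * σ k * d k) ≤ a 0 + T := by
    intro M
    have h2 : ∑ k ∈ Finset.range M, σ k ^ 2 ≤ T :=
      Summable.sum_le_tsum _ (fun i _ => sq_nonneg _) hσsq
    linarith [hapart M, ha0 M]
  have haB : ∀ k, a k ≤ a 0 + T := by
    intro k
    have h2 : ∑ j ∈ Finset.range k, σ j ^ 2 ≤ T :=
      Summable.sum_le_tsum _ (fun i _ => sq_nonneg _) hσsq
    have h3 : 0 ≤ ∑ j ∈ Finset.range k, (2 * σ j * d j) :=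
      Finset.sum_nonneg fun j _ => by nlinarith [hσpos j, hdpos j]
    linarith [hapart k]
  -- frequently small d
  have hfreq : ∀ ε : ℝ, 0 < ε → ∃ᶠ k in atTop, d k < ε := by
    intro ε hε
    by_contra hcon
    rw [Filter.not_frequently] at hcon
    simp only [not_lt] at hcon
    obtain ⟨N, hN⟩ := eventually_atTop.1 hcon
    obtain ⟨M, hM1, hM2⟩ := ((hσdiv.eventually_gt_atTop
      (∑ k ∈ Finset.range N, σ k + (a 0 + T) / (2 * ε))).and (eventually_ge_atTop N)).exists
    have hsub : ∑ k ∈ Finset.Ico N M, (2 * σ k * d k) ≤ ∑ k ∈ Finset.range M, (2 * σ k * d k) := by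
      rw [Finset.range_eq_Ico]
      exact Finset.sum_le_sum_of_subset_of_nonneg
        (Finset.Ico_subset_Ico (Nat.zero_le N) le_rfl)
        (fun i _ _ => by nlinarith [hσpos i, hdpos i])
    have hlow : ∑ k ∈ Finset.Ico N M, (2 * ε * σ k) ≤ ∑ k ∈ Finset.Ico N M, (2 * σ k * d k) :=
      Finset.sum_le_sum fun i hi => by
        have := hN i (Finset.mem_Ico.1 hi).1
        nlinarith [hσpos i]
    have heq : ∑ k ∈ Finset.Ico N M, (2 * ε * σ k)
        = 2 * ε * (∑ k ∈ Finset.range M, σ k - ∑ k ∈ Finset.range N, σ k) := by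
      rw [← Finset.mul_sum, Finset.sum_Ico_eq_sub _ hM2]
    have hkey : a 0 + T < 2 * ε * (∑ k ∈ Finset.range M, σ k - ∑ k ∈ Finset.range N, σ k) := by
      have h5 : (a 0 + T) / (2 * ε) < ∑ k ∈ Finset.range M, σ k - ∑ k ∈ Finset.range N, σ k := by
        linarith
      calc a 0 + T = ((a 0 + T) / (2 * ε)) * (2 * ε) := by field_simp
        _ < (∑ k ∈ Finset.range M, σ k - ∑ k ∈ Finset.range N, σ k) * (2 * ε) := by
            apply mul_lt_mul_of_pos_right h5 (by linarith)
        _ = _ := by ring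
    linarith [hsd M]
  obtain ⟨φ0, hφ0, hφ0d⟩ := Filter.extraction_forall_of_frequently
    (P := fun j k => d k < 1 / ((j : ℝ) + 1))
    (fun j => hfreq (1 / ((j : ℝ) + 1)) (by positivity))
  -- boundedness of x
  have hR : ∀ k, ‖x k‖ ≤ ‖zstar‖ + Real.sqrt (a 0 + T) := by
    intro k
    have h1 : ‖x k - zstar‖ ≤ Real.sqrt (a 0 + T) :=
      (Real.le_sqrt (norm_nonneg _) (by linarith [ha0 0])).2 (haB k)
    calc ‖x k‖ = ‖zstar + (x k - zstar)‖ := by rw [show zstar + (x k - zstar) = x k by abel]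
      _ ≤ ‖zstar‖ + ‖x k - zstar‖ := norm_add_le _ _
      _ ≤ _ := by linarith
  -- subsequence extraction
  obtain ⟨xbar, hxbarmem, ψ1, hψ1, hx1⟩ :=
    ((isCompact_closedBall (0 : EuclideanSpace ℝ (Fin n))
        (‖zstar‖ + Real.sqrt (a 0 + T))).inter_right hCcl).tendsto_subseq
      (x := fun j => x (φ0 j)) (fun j => ⟨mem_closedBall_zero_iff.2 (hR _), hxC _⟩)
  obtain ⟨M, hM⟩ := hybdd
  obtain ⟨ybar, hybarmem, ψ2, hψ2, hy2⟩ :=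
    ((isCompact_closedBall (0 : EuclideanSpace ℝ (Fin n)) M).inter_right hCcl).tendsto_subseq
      (x := fun j => y (φ0 (ψ1 j))) (fun j => ⟨mem_closedBall_zero_iff.2 (hM _), hyC _⟩)
  obtain ⟨tbar, htbarmem, ψ3, hψ3, ht3⟩ :=
    (isCompact_Icc (a := θ₀) (b := (1 : ℝ))).tendsto_subseq
      (x := fun j => t (φ0 (ψ1 (ψ2 j)))) (fun j => ⟨(ht _).1, (ht _).2.le⟩)
  have hxbarC : xbar ∈ C := hxbarmem.2
  have hybarC : ybar ∈ C := hybarmem.2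
  set Φ : ℕ → ℕ := fun j => φ0 (ψ1 (ψ2 (ψ3 j))) with hΦ_def
  have hΦmono : StrictMono Φ := hφ0.comp (hψ1.comp (hψ2.comp hψ3))
  have hxΦ : Tendsto (fun j => x (Φ j)) atTop (nhds xbar) :=
    hx1.comp ((hψ2.comp hψ3).tendsto_atTop)
  have hyΦ : Tendsto (fun j => y (Φ j)) atTop (nhds ybar) :=
    hy2.comp hψ3.tendsto_atTop
  have htΦ : Tendsto (fun j => t (Φ j)) atTop (nhds tbar) := ht3
  have hρΦ : Tendsto (fun j => ρ (Φ j)) atTop (nhds ρbar) :=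
    hρlim.comp hΦmono.tendsto_atTop
  have hdΦ : Tendsto (fun j => d (Φ j)) atTop (nhds 0) := by
    have hbound : ∀ j : ℕ, d (Φ j) ≤ 1 / ((j : ℝ) + 1) := by
      intro j
      have h1 := hφ0d (ψ1 (ψ2 (ψ3 j)))
      have h2 : (j : ℝ) ≤ (ψ1 (ψ2 (ψ3 j)) : ℝ) := by
        exact_mod_cast (hψ1.comp (hψ2.comp hψ3)).le_apply
      have h3 : 1 / ((ψ1 (ψ2 (ψ3 j)) : ℝ) + 1) ≤ 1 / ((j : ℝ) + 1) :=
        one_div_le_one_div_of_le (by positivity) (by linarith)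
      exact le_trans h1.le h3
    exact squeeze_zero (fun j => (hdpos _).le) hbound
      tendsto_one_div_add_atTop_nhds_zero_nat
  set zbar : EuclideanSpace ℝ (Fin n) := (1 - tbar) • xbar + tbar • ybar with hzbar_def
  have hzbarC : zbar ∈ C :=
    hCcv hxbarC hybarC (by linarith [htbarmem.2]) (by linarith [htbarmem.1]) (by ring)
  have hzΦ : Tendsto (fun j => z (Φ j)) atTop (nhds zbar) := by
    have heq : ∀ j, z (Φ j) = (1 - t (Φ j)) • x (Φ j) + t (Φ j) • y (Φ j) := fun j => (hb _).1
    rw [tendsto_congr heq]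
    exact ((tendsto_const_nhds.sub htΦ).smul hxΦ).add (htΦ.smul hyΦ)
  have hflim : ∀ (u v : ℕ → EuclideanSpace ℝ (Fin n)) (ub vb : EuclideanSpace ℝ (Fin n)),
      Tendsto u atTop (nhds ub) → Tendsto v atTop (nhds vb) →
      Tendsto (fun j => f (u j) (v j)) atTop (nhds (f ub vb)) := by
    intro u v ub vb hu hv
    exact (hcont.tendsto (ub, vb)).comp (hu.prodMk_nhds hv)
  -- the key claim: ybar = xbar
  have hxy : ybar = xbar := by
    by_contra hne
    have hnpos : 0 < ‖ybar - xbar‖ := norm_pos_iff.2 (sub_ne_zero_of_ne hne)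
    have hblim : (α / (2 * ρbar)) * ‖ybar - xbar‖ ^ 2 ≤ f zbar xbar - f zbar ybar := by
      have hineq : ∀ j, (α / (2 * ρ (Φ j))) * ‖y (Φ j) - x (Φ j)‖ ^ 2
          ≤ f (z (Φ j)) (x (Φ j)) - f (z (Φ j)) (y (Φ j)) := fun j => (hb (Φ j)).2
      have hA : Tendsto (fun j => (α / (2 * ρ (Φ j))) * ‖y (Φ j) - x (Φ j)‖ ^ 2) atTop
          (nhds ((α / (2 * ρbar)) * ‖ybar - xbar‖ ^ 2)) := by
        have h1 : Tendsto (fun j => (2 : ℝ) * ρ (Φ j)) atTop (nhds (2 * ρbar)) :=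
          tendsto_const_nhds.mul hρΦ
        have h2 : Tendsto (fun j => α / (2 * ρ (Φ j))) atTop (nhds (α / (2 * ρbar))) :=
          tendsto_const_nhds.div h1 (by positivity)
        exact h2.mul (((hyΦ.sub hxΦ).norm).pow 2)
      have hB : Tendsto (fun j => f (z (Φ j)) (x (Φ j)) - f (z (Φ j)) (y (Φ j))) atTop
          (nhds (f zbar xbar - f zbar ybar)) :=
        (hflim (fun j => z (Φ j)) (fun j => x (Φ j)) zbar xbar hzΦ hxΦ).sub
          (hflim (fun j => z (Φ j)) (fun j => y (Φ j)) zbar ybar hzΦ hyΦ)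
      exact le_of_tendsto_of_tendsto' hA hB hineq
    have hcoef : 0 < (α / (2 * ρbar)) * ‖ybar - xbar‖ ^ 2 :=
      mul_pos (div_pos hα0 (by positivity)) (pow_pos hnpos 2)
    have hc0 : 0 < f zbar xbar := by
      rcases eq_or_lt_of_le htbarmem.2 with h1 | h1
      · have hzy : zbar = ybar := by rw [hzbar_def, h1]; module
        have : f zbar ybar = 0 := by rw [hzy]; exact hdiag _ hybarC
        linarith
      · have hfyx : f zbar ybar < f zbar xbar := by linarith
        exact posA (hssq _ hzbarC) hxbarC hybarC (lt_of_lt_of_le hθ0 htbarmem.1) h1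
          (by rw [← hzbar_def]; exact hdiag _ hzbarC) hfyx
    have hopen : IsOpen {p : EuclideanSpace ℝ (Fin n) × EuclideanSpace ℝ (Fin n) |
        f p.1 p.2 < f zbar xbar / 2} := isOpen_lt hcont continuous_const
    have hmem : (zbar, zstar) ∈ {p : EuclideanSpace ℝ (Fin n) × EuclideanSpace ℝ (Fin n) |
        f p.1 p.2 < f zbar xbar / 2} := by
      have := hminty zbar hzbarC
      simp only [Set.mem_setOf_eq]
      linarith
    obtain ⟨ε, hε, hball⟩ := Metric.isOpen_iff.1 hopen _ hmem
    have hev1 : ∀ᶠ j in atTop, dist (z (Φ j)) zbar < ε :=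
      Metric.tendsto_nhds.1 hzΦ ε hε
    have hev2 : ∀ᶠ j in atTop, f zbar xbar / 2 < f (z (Φ j)) (x (Φ j)) :=
      (hflim (fun j => z (Φ j)) (fun j => x (Φ j)) zbar xbar hzΦ hxΦ).eventually
        (eventually_gt_nhds (by linarith : f zbar xbar / 2 < f zbar xbar))
    have hev3 : ∀ᶠ j in atTop, d (Φ j) < ε / 2 :=
      hdΦ.eventually (eventually_lt_nhds (by positivity : (0 : ℝ) < ε / 2))
    obtain ⟨j, h1, h2, h3⟩ := (hev1.and (hev2.and hev3)).exists
    set u : EuclideanSpace ℝ (Fin n) := zstar + (ε / 2) • g (Φ j) with hu_def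
    have hdu : dist u zstar < ε := by
      rw [dist_eq_norm, show u - zstar = (ε / 2) • g (Φ j) by rw [hu_def]; abel]
      rw [norm_smul, (hc (Φ j)).2]
      simp only [Real.norm_eq_abs, abs_of_pos (by positivity : (0:ℝ) < ε / 2)]
      linarith
    have hfu : f (z (Φ j)) u < f zbar xbar / 2 := by
      have : (z (Φ j), u) ∈ Metric.ball (zbar, zstar) ε := by
        rw [Metric.mem_ball, Prod.dist_eq]
        exact max_lt h1 hdu
      exact hball this
    have hlt : f (z (Φ j)) u < f (z (Φ j)) (x (Φ j)) := lt_trans hfu h2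
    have hinner := (hc (Φ j)).1 u hlt
    have hexp : ⟪g (Φ j), u - x (Φ j)⟫ = -d (Φ j) + ε / 2 := by
      have he : u - x (Φ j) = -(x (Φ j) - zstar) + (ε / 2) • g (Φ j) := by
        rw [hu_def]; abel
      rw [he, inner_add_right, inner_neg_right, real_inner_smul_right,
        real_inner_self_eq_norm_sq, (hc (Φ j)).2]
      simp only [hd_def]
      ring
    rw [hexp] at hinner
    linarith
  -- part 1 conclusion : xbar is a ρbar-quasisolution
  have hquasi : ∀ u ∈ C, 0 ≤ f xbar u + (1 / (2 * ρbar)) * ‖u - xbar‖ ^ 2 := by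
    intro u hu
    have h1 : Tendsto (fun j => f (x (Φ j)) (y (Φ j))
        + (1 / (2 * ρ (Φ j))) * ‖y (Φ j) - x (Φ j)‖ ^ 2) atTop
        (nhds (f xbar ybar + (1 / (2 * ρbar)) * ‖ybar - xbar‖ ^ 2)) := by
      have hco : Tendsto (fun j => (1 : ℝ) / (2 * ρ (Φ j))) atTop (nhds (1 / (2 * ρbar))) :=
        tendsto_const_nhds.div (tendsto_const_nhds.mul hρΦ) (by positivity)
      exact (hflim (fun j => x (Φ j)) (fun j => y (Φ j)) xbar ybar hxΦ hyΦ).add (hco.mul (((hyΦ.sub hxΦ).norm).pow 2))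
    have h2 : Tendsto (fun j => f (x (Φ j)) u
        + (1 / (2 * ρ (Φ j))) * ‖u - x (Φ j)‖ ^ 2) atTop
        (nhds (f xbar u + (1 / (2 * ρbar)) * ‖u - xbar‖ ^ 2)) := by
      have hco : Tendsto (fun j => (1 : ℝ) / (2 * ρ (Φ j))) atTop (nhds (1 / (2 * ρbar))) :=
        tendsto_const_nhds.div (tendsto_const_nhds.mul hρΦ) (by positivity)
      exact (hflim (fun j => x (Φ j)) (fun _ => u) xbar u hxΦ tendsto_const_nhds).add
        (hco.mul (((tendsto_const_nhds.sub hxΦ).norm).pow 2))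
    have h3 := le_of_tendsto_of_tendsto' h1 h2 (fun j => (ha (Φ j)).1 u hu)
    rw [hxy] at h3
    rw [hdiag _ hxbarC] at h3
    simp only [sub_self, norm_zero] at h3
    calc (0:ℝ) = 0 + 1 / (2 * ρbar) * 0 ^ 2 := by ring
      _ ≤ _ := h3
  refine ⟨⟨xbar, hxbarC, Φ, hΦmono, hxΦ, hquasi⟩, ?_⟩
  -- Part 2: strong quasiconvexity
  intro hstrong
  -- xbar solves (EP)
  have hsol : ∀ v ∈ C, 0 ≤ f xbar v := by
    intro v hv
    by_contra hneg
    push_neg at hneg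
    obtain ⟨γ, hγ, hsq⟩ := hstrong xbar hxbarC
    have hgρ : 0 < γ * ρbar := mul_pos hγ hρbar
    have hlex : ∃ l : ℝ, 0 < l ∧ l < 1 ∧ l / (2 * ρbar) < (1 - l) * (γ / 2) := by
      refine ⟨γ * ρbar / (2 * (1 + γ * ρbar)), by positivity, ?_, ?_⟩
      · rw [div_lt_one (by positivity)]
        nlinarith
      · rw [div_lt_iff₀ (by positivity)]
        have hl_eq : (γ * ρbar / (2 * (1 + γ * ρbar))) * (1 + γ * ρbar) = γ * ρbar / 2 := by
          field_simp
        nlinarith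
    obtain ⟨l, hl0, hl1, harith⟩ := hlex
    have hvx : v ≠ xbar := fun h => by rw [h, hdiag _ hxbarC] at hneg; exact lt_irrefl _ hneg
    have hvnorm : 0 < ‖v - xbar‖ := norm_pos_iff.2 (sub_ne_zero_of_ne hvx)
    have hmemC : l • v + (1 - l) • xbar ∈ C :=
      hCcv hv hxbarC hl0.le (by linarith) (by ring)
    have hul := hsq v hv xbar hxbarC l ⟨hl0.le, hl1.le⟩
    rw [hdiag _ hxbarC, max_eq_right hneg.le] at hul
    have hq := hquasi _ hmemC
    have hnorm_eq : ‖l • v + (1 - l) • xbar - xbar‖ = l * ‖v - xbar‖ := by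
      rw [show l • v + (1 - l) • xbar - xbar = l • (v - xbar) by module, norm_smul,
        Real.norm_eq_abs, abs_of_pos hl0]
    rw [hnorm_eq] at hq
    have hkey : (1 / (2 * ρbar)) * (l * ‖v - xbar‖) ^ 2
        < (l * (1 - l) * (γ / 2)) * ‖v - xbar‖ ^ 2 := by
      have h1 : (1 / (2 * ρbar)) * (l * ‖v - xbar‖) ^ 2
          = (l / (2 * ρbar)) * (l * ‖v - xbar‖ ^ 2) := by ring
      have h2 : (l * (1 - l) * (γ / 2)) * ‖v - xbar‖ ^ 2
          = ((1 - l) * (γ / 2)) * (l * ‖v - xbar‖ ^ 2) := by ring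
      rw [h1, h2]
      exact mul_lt_mul_of_pos_right harith (by positivity)
    linarith
  -- every solution of (EP) equals zstar
  have huniq : ∀ w ∈ C, (∀ u ∈ C, 0 ≤ f w u) → w = zstar := by
    intro w hw hwsol
    obtain ⟨γ, hγ, hsq⟩ := hstrong w hw
    have h0 : f w zstar = 0 := le_antisymm (hminty w hw) (hwsol zstar hzstar)
    have hm := hsq zstar hzstar w hw (1 / 2) ⟨by norm_num, by norm_num⟩
    rw [h0, hdiag _ hw] at hm
    have hmemC : (1 / 2 : ℝ) • zstar + (1 - 1 / 2 : ℝ) • w ∈ C :=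
      hCcv hzstar hw (by norm_num) (by norm_num) (by norm_num)
    have h1 := hwsol _ hmemC
    have h2 : ‖zstar - w‖ ^ 2 ≤ 0 := by
      have := le_trans h1 hm
      simp only [max_self] at this
      nlinarith
    have h3 : zstar - w = 0 := by
      have := sq_nonneg ‖zstar - w‖
      have h4 : ‖zstar - w‖ = 0 := by nlinarith [norm_nonneg (zstar - w)]
      exact norm_eq_zero.1 h4
    have : zstar = w := by
      have := sub_eq_zero.1 h3; exact this
    exact this.symm
  have hxz : xbar = zstar := huniq xbar hxbarC hsol
  -- whole-sequence convergence
  set S : ℕ → ℝ := fun k => ∑ j ∈ Finset.range k, σ j ^ 2 with hS_def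
  have hST : Tendsto S atTop (nhds T) := hσsq.hasSum.tendsto_sum_nat
  have hcanti : Antitone (fun k => a k + (T - S k)) := by
    apply antitone_nat_of_succ_le
    intro k
    have h1 := hstep k
    have h2 : S (k + 1) = S k + σ k ^ 2 := Finset.sum_range_succ _ _
    show a (k + 1) + (T - S (k + 1)) ≤ a k + (T - S k)
    linarith
  have hcbdd : BddBelow (Set.range fun k => a k + (T - S k)) := by
    refine ⟨0, ?_⟩
    rintro v ⟨k, rfl⟩
    have h2 : S k ≤ T := Summable.sum_le_tsum _ (fun i _ => sq_nonneg _) hσsq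
    have := ha0 k
    show (0:ℝ) ≤ a k + (T - S k)
    linarith
  have hcconv := tendsto_atTop_ciInf hcanti hcbdd
  have haconv : Tendsto a atTop (nhds (⨅ k, (a k + (T - S k)))) := by
    have h1 : Tendsto (fun k => (a k + (T - S k)) - (T - S k)) atTop
        (nhds ((⨅ k, (a k + (T - S k))) - 0)) := by
      have h2 : Tendsto (fun k => T - S k) atTop (nhds 0) := by
        have h3 : Tendsto (fun k => T - S k) atTop (nhds (T - T)) :=
          Tendsto.sub tendsto_const_nhds hST
        simpa using h3
      exact hcconv.sub h2
    simpa using h1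
  have haΦ : Tendsto (fun j => a (Φ j)) atTop (nhds 0) := by
    have h1 : Tendsto (fun j => ‖x (Φ j) - zstar‖ ^ 2) atTop
        (nhds (‖xbar - zstar‖ ^ 2)) := ((hxΦ.sub tendsto_const_nhds).norm).pow 2
    rw [hxz] at h1
    simpa [ha_def] using h1
  have hL0 : (⨅ k, (a k + (T - S k))) = 0 :=
    tendsto_nhds_unique (haconv.comp hΦmono.tendsto_atTop) haΦ
  rw [hL0] at haconv
  have hxlim : Tendsto x atTop (nhds zstar) := by
    rw [tendsto_iff_norm_sub_tendsto_zero]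
    have h1 : Tendsto (fun k => Real.sqrt (a k)) atTop (nhds (Real.sqrt 0)) :=
      (Real.continuous_sqrt.tendsto 0).comp haconv
    have h2 : (fun k => Real.sqrt (a k)) = fun k => ‖x k - zstar‖ := by
      funext k
      simp only [ha_def]
      exact Real.sqrt_sq (norm_nonneg _)
    rw [h2, Real.sqrt_zero] at h1
    exact h1
  exact ⟨zstar, hzstar, hxlim, hxz ▸ hsol, huniq⟩
end

section
/- Let C be a nonempty closed convex subset of ℝⁿ and f : ℝⁿ × ℝⁿ → ℝ with f(x,x) = 0 for all x ∈ C. Assume that for every y ∈ C the function x ↦ f(x,y) is upper semicontinuous, that for every x ∈ C the function y ↦ f(x,y) is semi-strictly quasiconvex on C, and that f is pseudomonotone on C. Then the solution set S of the equilibrium problem coincides with the solution set S_d of the Minty (dual) problem: x* ∈ C satisfies f(x*,y) ≥ 0 for all y ∈ C if and only if f(y, x*) ≤ 0 for all y ∈ C. -/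
open Filter Topology

theorem solution_sets_coincide_of_pseudomonotone {n : ℕ}
    (C : Set (EuclideanSpace ℝ (Fin n)))
    (hCne : C.Nonempty) (hCcl : IsClosed C) (hCcv : Convex ℝ C)
    (f : EuclideanSpace ℝ (Fin n) → EuclideanSpace ℝ (Fin n) → ℝ)
    (hdiag : ∀ x ∈ C, f x x = 0)
    (husc : ∀ y ∈ C, UpperSemicontinuous (fun x => f x y))
    (hssq : ∀ x ∈ C, SemiStrictlyQuasiconvexOn C (f x))
    -- f is pseudomonotone on C
    (hpm : ∀ x ∈ C, ∀ y ∈ C, 0 ≤ f x y → f y x ≤ 0) :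
    ∀ xstar ∈ C, ((∀ y ∈ C, 0 ≤ f xstar y) ↔ (∀ y ∈ C, f y xstar ≤ 0)) := by
  intro xstar hx
  constructor
  · intro hS y hy
    exact hpm xstar hx y hy (hS y hy)
  · intro hD y hy
    by_contra hneg
    push_neg at hneg
    -- For every t ∈ (0,1), set xt := (1-t)•xstar + t•y; then f xt y ≥ 0.
    have key : ∀ t : ℝ, t ∈ Set.Ioo (0:ℝ) 1 →
        0 ≤ f ((1 - t) • xstar + t • y) y := by
      intro t ht
      set xt := (1 - t) • xstar + t • y with hxt
      have hxtC : xt ∈ C := hCcv hx hy (by linarith [ht.2]) (le_of_lt ht.1)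
        (by ring)
      have hdxt : f xt xt = 0 := hdiag xt hxtC
      by_contra hlt
      push_neg at hlt
      have hfx : f xt xstar ≤ 0 := hD xt hxtC
      rcases lt_or_eq_of_le hfx with hfx | hfx
      · -- quasiconvexity gives f xt xt ≤ max (f xt xstar) (f xt y) < 0
        have hq := (hssq xt hxtC).1 xstar hx y hy t ⟨le_of_lt ht.1, le_of_lt ht.2⟩
        rw [← hxt] at hq
        rw [hdxt] at hq
        have : max (f xt xstar) (f xt y) < 0 := max_lt hfx hlt
        linarith
      · -- f xt xstar = 0 > f xt y; semi-strict quasiconvexity at xt itself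
        have hss := (hssq xt hxtC).2 y hy xstar hx (1 - t)
          ⟨by linarith [ht.2], by linarith [ht.1]⟩ (by rw [← hfx] at hlt; exact hlt)
        have heq : (1 - (1 - t)) • y + (1 - t) • xstar = xt := by
          rw [hxt]; module
        rw [heq, hdxt, ← hfx] at hss
        exact lt_irrefl _ hss
    -- Upper semicontinuity: f z y < 0 for z near xstar
    have husc' := husc y hy xstar 0 hneg
    -- the path t ↦ (1-t)•xstar + t•y tends to xstar as t → 0
    have hcont : Filter.Tendsto (fun t : ℝ => (1 - t) • xstar + t • y)
        (𝓝 0) (𝓝 xstar) := by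
      have : Continuous (fun t : ℝ => (1 - t) • xstar + t • y) := by
        continuity
      have h0 : (fun t : ℝ => (1 - t) • xstar + t • y) 0 = xstar := by
        simp
      simpa [h0] using this.tendsto 0
    have hev : ∀ᶠ t : ℝ in 𝓝 0, f ((1 - t) • xstar + t • y) y < 0 :=
      hcont.eventually husc'
    have hev' : ∀ᶠ t : ℝ in 𝓝[>] (0:ℝ),
        f ((1 - t) • xstar + t • y) y < 0 :=
      hev.filter_mono nhdsWithin_le_nhds
    have hev'' : ∀ᶠ t : ℝ in 𝓝[>] (0:ℝ), t ∈ Set.Ioo (0:ℝ) 1 := by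
      filter_upwards [eventually_mem_nhdsWithin,
        Filter.eventually_iff_exists_mem.mpr
          ⟨Set.Iio 1, by
            apply nhdsWithin_le_nhds
            exact Iio_mem_nhds one_pos, fun t ht => ht⟩] with t h1 h2
      exact ⟨h1, h2⟩
    have : ∀ᶠ t : ℝ in 𝓝[>] (0:ℝ), False := by
      filter_upwards [hev', hev''] with t h1 h2
      exact absurd (key t h2) (not_le.mpr h1)
    exact this.exists.elim fun t ht => ht
end
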